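/- Under the conditions S_I–S_IV on the sequence of random vectors of random length, and assuming additionally that all the variables τ_k and u_{k,i} are integer-valued, for every integer n ≥ 2 and every integer x ≥ 1 the following identity holds: P( Z₊(n) + u_{ν₊(n)+1, γ₊(n)} = x and τ₁ ≤ n ) = Q · P( Z*₊(n) = x and γ*₊(n) = 0 ). -/

import Mathlib

/-!
Split both events according to the index `m = ν₊(n) ≥ 1` of the last renewal before `n`, its
epoch `t = T_m ≤ n` and the integer `y = x - Z_m`. On the left the cell is
`{T_m = t, Z_m = x - y, τ_{m+1} > n - t, u_{m+1, n-t} = y}`; on the right, where `γ*₊(n) = 0`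
forces `T*_m = T_m + τ* = n`, it is `{T_m = t, Z_m = x - y, τ* = n - t, ζ* = y}`. The pair
`(T_m, Z_m)` is independent both of the `(m+1)`-st vector, which is distributed as the generic
one, and of `(τ*, ζ*)`, whose law is `P(τ > i, u_i = y) / Q`; so the two cell probabilities
differ exactly by the factor `Q`. Integrality of the weights makes the cells countable.
-/

open MeasureTheory ProbabilityTheory Filter Real Set
open scoped ENNReal Topology

noncomputable section

namespace CompoundRenewal

/-- A sequence `{(τ_k, (u_{k,1}, …, u_{k,τ_k}))}_{k ≥ 1}` of mutually independent random
vectors of random length satisfying conditions `S_I`–`S_IV`, together with the auxiliary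
independent vector `(τ*, ζ*)` whose distribution is
`P(τ* = i, ζ* ∈ dy) = (1/Q) P(τ ≥ i + 1, u_i ∈ dy)`, `Q = E τ`.
The vector of index `k` is encoded as the pair `(τ_k, (u_{k,i})_{i ≤ τ_k})`, where the
array is extended by `0` for `i > τ_k` (and `u_{k,0} = 0`). -/
structure CRP (Ω : Type) [MeasureSpace Ω] where
  /-- the constant `c₁ > 0` of condition `S_II` -/
  c₁ : ℝ
  c₁_pos : 0 < c₁
  /-- the lengths `τ_k`, `k ≥ 1` (positive integers) -/
  tauSeq : ℕ → Ω → ℕ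
  /-- the weights `u_{k,i}`, `k ≥ 1`, `0 ≤ i ≤ τ_k` -/
  uSeq : ℕ → ℕ → Ω → ℝ
  tau_pos : ∀ k ω, 1 ≤ tauSeq k ω
  u_zero : ∀ k ω, uSeq k 0 ω = 0
  tau_meas : ∀ k, Measurable (tauSeq k)
  u_meas : ∀ k i, Measurable (uSeq k i)
  /-- `S_I` : mutual independence of the vectors of indices `k ≥ 1` -/
  indep : iIndepFun
    (fun k : ℕ => fun ω => ((tauSeq (k + 1) ω : ℕ),
      fun i : ℕ => if i ≤ tauSeq (k + 1) ω then uSeq (k + 1) i ω else 0)) ℙ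
  /-- `S_I` : the vectors of indices `k ≥ 2` are identically distributed -/
  ident : ∀ k : ℕ, 2 ≤ k →
    Measure.map (fun ω => ((tauSeq k ω : ℕ),
        fun i : ℕ => if i ≤ tauSeq k ω then uSeq k i ω else 0)) ℙ
      = Measure.map (fun ω => ((tauSeq 2 ω : ℕ),
        fun i : ℕ => if i ≤ tauSeq 2 ω then uSeq 2 i ω else 0)) ℙ
  /-- `S_II` : positivity, the lower bound `c₁` and the maximality of the last weight -/
  sII : ∀ᵐ ω ∂ℙ, 0 < uSeq 1 (tauSeq 1 ω) ω ∧
    ∀ k : ℕ, 2 ≤ k → ∀ i : ℕ, 1 ≤ i → i ≤ tauSeq k ω →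
      c₁ ≤ uSeq k i ω ∧ uSeq k i ω ≤ uSeq k (tauSeq k ω) ω
  /-- `S_III` : exponential moments -/
  sIII : ∃ C : ℝ, 0 < C ∧
    (∫⁻ ω, ENNReal.ofReal (Real.exp (C * (tauSeq 1 ω : ℝ))) ∂ℙ < ⊤) ∧
    (∫⁻ ω, ENNReal.ofReal (Real.exp (C * (tauSeq 2 ω : ℝ))) ∂ℙ < ⊤) ∧
    (∫⁻ ω, ENNReal.ofReal (Real.exp (C * uSeq 1 (tauSeq 1 ω) ω)) ∂ℙ < ⊤) ∧
    (∫⁻ ω, ENNReal.ofReal (Real.exp (C * uSeq 2 (tauSeq 2 ω) ω)) ∂ℙ < ⊤)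
  /-- `S_IV` : `P(τ = 1, u_τ ≥ y) > 0` for all `y` in some nonempty interval -/
  sIV : ∃ y₀ y₁ : ℝ, y₀ < y₁ ∧ ∀ y ∈ Set.Ioo y₀ y₁,
    0 < ℙ {ω | tauSeq 2 ω = 1 ∧ y ≤ uSeq 2 (tauSeq 2 ω) ω}
  /-- the auxiliary vector `(τ*, ζ*)` -/
  tauStar : Ω → ℕ
  zetaStar : Ω → ℝ
  tauStar_meas : Measurable tauStar
  zetaStar_meas : Measurable zetaStar
  /-- `(τ*, ζ*)` is independent of the whole sequence -/
  star_indep : IndepFun (fun ω => (tauStar ω, zetaStar ω))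
    (fun ω => fun k : ℕ => ((tauSeq (k + 1) ω : ℕ),
      fun i : ℕ => if i ≤ tauSeq (k + 1) ω then uSeq (k + 1) i ω else 0)) ℙ
  /-- the distribution of `(τ*, ζ*)` : `Q·P(τ* = i, ζ* ∈ s) = P(τ ≥ i + 1, u_i ∈ s)` -/
  star_dist : ∀ i : ℕ, ∀ s : Set ℝ, MeasurableSet s →
    ENNReal.ofReal (∫ ω, (tauSeq 2 ω : ℝ) ∂ℙ) * ℙ {ω | tauStar ω = i ∧ zetaStar ω ∈ s}
      = ℙ {ω | i + 1 ≤ tauSeq 2 ω ∧ uSeq 2 i ω ∈ s}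

variable {Ω : Type} [MeasureSpace Ω]

/-- `ζ_k = u_{k, τ_k}`. -/
def zetaSeq (P : CRP Ω) (k : ℕ) (ω : Ω) : ℝ := P.uSeq k (P.tauSeq k ω) ω

/-- `T_n = τ_1 + ⋯ + τ_n` (with `T_0 = 0`). -/
def Tn (P : CRP Ω) (n : ℕ) (ω : Ω) : ℕ := ∑ k ∈ Finset.Icc 1 n, P.tauSeq k ω

/-- `Z_n = ζ_1 + ⋯ + ζ_n` (with `Z_0 = 0`). -/
def Zn (P : CRP Ω) (n : ℕ) (ω : Ω) : ℝ := ∑ k ∈ Finset.Icc 1 n, zetaSeq P k ω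

/-- `ν₊(n) = max {k ≥ 0 : T_k ≤ n}`. -/
def nuP (P : CRP Ω) (n : ℕ) (ω : Ω) : ℕ := Nat.findGreatest (fun k => Tn P k ω ≤ n) n

/-- `γ₊(n) = n - T_{ν₊(n)}`. -/
def gamP (P : CRP Ω) (n : ℕ) (ω : Ω) : ℕ := n - Tn P (nuP P n ω) ω

/-- The compound renewal process `Z₊(n) = Z_{ν₊(n)}`. -/
def ZP (P : CRP Ω) (n : ℕ) (ω : Ω) : ℝ := Zn P (nuP P n ω) ω

/-- `Q = E τ`. -/
def Q (P : CRP Ω) : ℝ := ∫ ω, (P.tauSeq 2 ω : ℝ) ∂ℙ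

/-- The modified lengths: `τ*₁ = τ₁ + τ*`, `τ*_k = τ_k` for `k ≥ 2`. -/
def tauSt (P : CRP Ω) (k : ℕ) (ω : Ω) : ℕ :=
  if k = 1 then P.tauSeq 1 ω + P.tauStar ω else P.tauSeq k ω

/-- The modified weights: `ζ*₁ = ζ₁ + ζ*`, `ζ*_k = ζ_k` for `k ≥ 2`. -/
def zetaSt (P : CRP Ω) (k : ℕ) (ω : Ω) : ℝ :=
  if k = 1 then zetaSeq P 1 ω + P.zetaStar ω else zetaSeq P k ω

/-- `T*_n`. -/
def TnSt (P : CRP Ω) (n : ℕ) (ω : Ω) : ℕ := ∑ k ∈ Finset.Icc 1 n, tauSt P k ω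

/-- `Z*_n`. -/
def ZnSt (P : CRP Ω) (n : ℕ) (ω : Ω) : ℝ := ∑ k ∈ Finset.Icc 1 n, zetaSt P k ω

/-- `ν*₊(n)`. -/
def nuPSt (P : CRP Ω) (n : ℕ) (ω : Ω) : ℕ := Nat.findGreatest (fun k => TnSt P k ω ≤ n) n

/-- `γ*₊(n) = n - T*_{ν*₊(n)}`. -/
def gamPSt (P : CRP Ω) (n : ℕ) (ω : Ω) : ℕ := n - TnSt P (nuPSt P n ω) ω

/-- The modified compound renewal process `Z*₊(n) = Z*_{ν*₊(n)}`. -/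
def ZPSt (P : CRP Ω) (n : ℕ) (ω : Ω) : ℝ := ZnSt P (nuPSt P n ω) ω

open Function

lemma findGreatest_le_eq_iff {g : ℕ → ℕ} (hg : StrictMono g) (h0 : g 0 = 0) {n m : ℕ} :
    Nat.findGreatest (fun k => g k ≤ n) n = m ↔ g m ≤ n ∧ n < g (m + 1) := by
  have hle : ∀ k, k ≤ g k := fun k => hg.le_apply
  constructor
  · intro h
    obtain ⟨-, hspec, hmax⟩ := Nat.findGreatest_eq_iff.1 h
    refine ⟨?_, lt_of_not_ge fun hn => hmax (Nat.lt_succ_self m) (le_trans (hle _) hn) hn⟩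
    rcases Nat.eq_zero_or_pos m with rfl | hm
    · simp [h0]
    · exact hspec hm.ne'
  · rintro ⟨hm, hlt⟩
    refine Nat.findGreatest_eq_iff.2 ⟨(hle m).trans hm, fun _ => hm, fun k hk _ hgk => ?_⟩
    have := hg.monotone (show m + 1 ≤ k by omega)
    omega

lemma strictMono_sum_Icc {f : ℕ → ℕ} (hf : ∀ k, 0 < f k) :
    StrictMono fun m => ∑ k ∈ Finset.Icc 1 m, f k :=
  strictMono_nat_of_lt_succ fun m => by
    rw [Finset.sum_Icc_succ_top (by omega)]
    exact Nat.lt_add_of_pos_right (hf (m + 1))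

lemma sum_Icc_one_eq_sum_range {M : Type*} [AddCommMonoid M] (f : ℕ → M) (m : ℕ) :
    ∑ k ∈ Finset.Icc 1 m, f k = ∑ i ∈ Finset.range m, f (i + 1) := by
  rw [Finset.range_eq_Ico, Finset.sum_Ico_add', zero_add, Finset.Ico_add_one_right_eq_Icc]

section Renewal

variable (P : CRP Ω) (ω : Ω)

lemma Tn_succ (m : ℕ) : Tn P (m + 1) ω = Tn P m ω + P.tauSeq (m + 1) ω :=
  Finset.sum_Icc_succ_top (by omega) _

lemma Tn_strictMono : StrictMono fun m => Tn P m ω :=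
  strictMono_sum_Icc fun k => P.tau_pos k ω

lemma nuP_eq_iff {n m : ℕ} : nuP P n ω = m ↔ Tn P m ω ≤ n ∧ n < Tn P (m + 1) ω :=
  findGreatest_le_eq_iff (Tn_strictMono P ω) (by simp [Tn])

lemma tauSt_eq (k : ℕ) :
    tauSt P k ω = P.tauSeq k ω + if k = 1 then P.tauStar ω else 0 := by
  unfold tauSt; split_ifs <;> simp_all

lemma zetaSt_eq (k : ℕ) :
    zetaSt P k ω = zetaSeq P k ω + if k = 1 then P.zetaStar ω else 0 := by
  unfold zetaSt; split_ifs <;> simp_all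

lemma TnSt_eq {m : ℕ} (hm : 1 ≤ m) : TnSt P m ω = Tn P m ω + P.tauStar ω := by
  simp [TnSt, Tn, tauSt_eq, Finset.sum_add_distrib, hm]

lemma ZnSt_eq {m : ℕ} (hm : 1 ≤ m) : ZnSt P m ω = Zn P m ω + P.zetaStar ω := by
  simp [ZnSt, Zn, zetaSt_eq, Finset.sum_add_distrib, hm]

lemma TnSt_strictMono : StrictMono fun m => TnSt P m ω :=
  strictMono_sum_Icc fun k => by rw [tauSt_eq]; exact Nat.add_pos_left (P.tau_pos k ω) _

lemma nuPSt_eq_iff {n m : ℕ} : nuPSt P n ω = m ↔ TnSt P m ω ≤ n ∧ n < TnSt P (m + 1) ω :=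
  findGreatest_le_eq_iff (TnSt_strictMono P ω) (by simp [TnSt])

lemma nuPSt_eq_of_TnSt_eq {n m : ℕ} (h : TnSt P m ω = n) : nuPSt P n ω = m :=
  (nuPSt_eq_iff P ω).2 ⟨h.le, h ▸ TnSt_strictMono P ω (Nat.lt_succ_self m)⟩

lemma exists_int_Zn (hint : ∀ k i ω, ∃ m : ℤ, P.uSeq k i ω = (m : ℝ)) (m : ℕ) :
    ∃ z : ℤ, Zn P m ω = z := by
  choose f hf using hint
  exact ⟨∑ k ∈ Finset.Icc 1 m, f k (P.tauSeq k ω) ω, by simp [Zn, zetaSeq, hf]⟩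

end Renewal

section Independence

variable (P : CRP Ω)

/-- The vector of index `k + 1`, as in `CRP.indep`. -/
def vec (k : ℕ) (ω : Ω) : ℕ × (ℕ → ℝ) :=
  (P.tauSeq (k + 1) ω, fun i => if i ≤ P.tauSeq (k + 1) ω then P.uSeq (k + 1) i ω else 0)

def tauZeta (w : ℕ × (ℕ → ℝ)) : ℕ × ℝ := (w.1, w.2 w.1)

def TZn (m : ℕ) (ω : Ω) : ℕ × ℝ := (Tn P m ω, Zn P m ω)

lemma measurable_vec (k : ℕ) : Measurable (vec P k) :=
  (P.tau_meas (k + 1)).prodMk <| measurable_pi_lambda _ fun i =>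
    Measurable.ite (measurableSet_le measurable_const (P.tau_meas (k + 1))) (P.u_meas (k + 1) i)
      measurable_const

lemma measurable_tauZeta : Measurable tauZeta :=
  measurable_fst.prodMk <| measurable_from_prod_countable_right fun j => measurable_pi_apply j

lemma TZn_eq_sum (m : ℕ) (ω : Ω) :
    TZn P m ω = ∑ i ∈ Finset.range m, tauZeta (vec P i ω) := by
  ext
  · simp [TZn, Tn, tauZeta, vec, Prod.fst_sum, sum_Icc_one_eq_sum_range]
  · simp [TZn, Zn, zetaSeq, tauZeta, vec, Prod.snd_sum, sum_Icc_one_eq_sum_range]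

lemma measurable_sum_tauZeta (m : ℕ) :
    Measurable fun w : ℕ → ℕ × (ℕ → ℝ) => ∑ i ∈ Finset.range m, tauZeta (w i) :=
  Finset.measurable_sum _ fun i _ => measurable_tauZeta.comp (measurable_pi_apply i)

lemma TZn_eq_comp (m : ℕ) :
    TZn P m = (fun w : ℕ → ℕ × (ℕ → ℝ) => ∑ i ∈ Finset.range m, tauZeta (w i)) ∘
      fun ω k => vec P k ω :=
  funext (TZn_eq_sum P m)

lemma measurable_TZn (m : ℕ) : Measurable (TZn P m) := by
  rw [TZn_eq_comp]
  exact (measurable_sum_tauZeta m).comp (measurable_pi_lambda _ fun k => measurable_vec P k)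

lemma indepFun_TZn_vec (m : ℕ) : IndepFun (TZn P m) (vec P m) ℙ := by
  have hind : iIndepFun (vec P) ℙ := P.indep
  let φ : ((i : Finset.range m) → ℕ × (ℕ → ℝ)) → ℕ × ℝ := fun v => ∑ i, tauZeta (v i)
  have hφ : Measurable φ :=
    Finset.measurable_sum _ fun i _ => measurable_tauZeta.comp (measurable_pi_apply i)
  have hTZn : TZn P m = φ ∘ fun ω (i : Finset.range m) => vec P i ω := by
    funext ω
    rw [TZn_eq_sum]
    exact (Finset.sum_coe_sort _ fun i => tauZeta (vec P i ω)).symm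
  rw [hTZn]
  exact (hind.indepFun_finset (Finset.range m) {m} (by simp) (measurable_vec P)).comp hφ
    (measurable_pi_apply ⟨m, Finset.mem_singleton_self m⟩)

lemma indepFun_star_TZn (m : ℕ) :
    IndepFun (fun ω => (P.tauStar ω, P.zetaStar ω)) (TZn P m) ℙ := by
  rw [TZn_eq_comp]
  exact P.star_indep.comp measurable_id (measurable_sum_tauZeta m)

lemma preimage_vec (k γ : ℕ) (s : Set ℝ) :
    vec P k ⁻¹' {w | γ < w.1 ∧ w.2 γ ∈ s}
      = {ω | γ < P.tauSeq (k + 1) ω ∧ P.uSeq (k + 1) γ ω ∈ s} := by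
  ext ω
  simp only [vec, Set.mem_preimage]
  exact and_congr_right fun h => by simp only [if_pos h.le]

lemma measurableSet_overshoot (γ : ℕ) {s : Set ℝ} (hs : MeasurableSet s) :
    MeasurableSet {w : ℕ × (ℕ → ℝ) | γ < w.1 ∧ w.2 γ ∈ s} :=
  (measurable_fst measurableSet_Ioi).inter (((measurable_pi_apply γ).comp measurable_snd) hs)

lemma measure_next_eq_Q_mul {m : ℕ} (hm : 1 ≤ m) (γ : ℕ) {s : Set ℝ}
    (hs : MeasurableSet s) :
    ℙ {ω | γ < P.tauSeq (m + 1) ω ∧ P.uSeq (m + 1) γ ω ∈ s}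
      = ENNReal.ofReal (Q P) * ℙ {ω | P.tauStar ω = γ ∧ P.zetaStar ω ∈ s} := by
  have hident : Measure.map (vec P m) ℙ = Measure.map (vec P 1) ℙ :=
    P.ident (m + 1) (by omega)
  have hN := measurableSet_overshoot γ hs
  calc ℙ {ω | γ < P.tauSeq (m + 1) ω ∧ P.uSeq (m + 1) γ ω ∈ s}
      = ℙ (vec P 1 ⁻¹' {w | γ < w.1 ∧ w.2 γ ∈ s}) := by
        rw [← preimage_vec, ← Measure.map_apply (measurable_vec P m) hN, hident,
          Measure.map_apply (measurable_vec P 1) hN]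
    _ = ENNReal.ofReal (Q P) * ℙ {ω | P.tauStar ω = γ ∧ P.zetaStar ω ∈ s} := by
        rw [preimage_vec, Q, P.star_dist γ s hs]
        rfl

lemma measure_TZn_inter_next_eq_Q_mul {m : ℕ} (hm : 1 ≤ m) {S : Set (ℕ × ℝ)}
    (hS : MeasurableSet S) (γ : ℕ) {s : Set ℝ} (hs : MeasurableSet s) :
    ℙ {ω | TZn P m ω ∈ S ∧ γ < P.tauSeq (m + 1) ω ∧ P.uSeq (m + 1) γ ω ∈ s}
      = ENNReal.ofReal (Q P) *
        ℙ {ω | TZn P m ω ∈ S ∧ P.tauStar ω = γ ∧ P.zetaStar ω ∈ s} := by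
  have hstar : {ω | P.tauStar ω = γ ∧ P.zetaStar ω ∈ s}
      = (fun ω => (P.tauStar ω, P.zetaStar ω)) ⁻¹' ({γ} ×ˢ s) := by
    ext; simp
  calc ℙ {ω | TZn P m ω ∈ S ∧ γ < P.tauSeq (m + 1) ω ∧ P.uSeq (m + 1) γ ω ∈ s}
      = ℙ (TZn P m ⁻¹' S ∩ vec P m ⁻¹' {w | γ < w.1 ∧ w.2 γ ∈ s}) := by
        rw [preimage_vec]; rfl
    _ = ℙ (TZn P m ⁻¹' S) * ℙ (vec P m ⁻¹' {w | γ < w.1 ∧ w.2 γ ∈ s}) :=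
        (indepFun_TZn_vec P m).measure_inter_preimage_eq_mul _ _ hS
          (measurableSet_overshoot γ hs)
    _ = ENNReal.ofReal (Q P) *
          (ℙ ((fun ω => (P.tauStar ω, P.zetaStar ω)) ⁻¹' ({γ} ×ˢ s)) * ℙ (TZn P m ⁻¹' S)) := by
        rw [preimage_vec, measure_next_eq_Q_mul P hm γ hs, hstar]; ring
    _ = ENNReal.ofReal (Q P) *
          ℙ {ω | TZn P m ω ∈ S ∧ P.tauStar ω = γ ∧ P.zetaStar ω ∈ s} := by
        rw [← (indepFun_star_TZn P m).measure_inter_preimage_eq_mul _ _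
          ((measurableSet_singleton γ).prod hs) hS, ← hstar, Set.inter_comm]
        rfl

end Independence

section Cells

variable (P : CRP Ω) (n : ℕ) (x : ℤ)

def lhsCell (m t : ℕ) (y : ℤ) : Set Ω :=
  {ω | TZn P m ω = (t, ((x - y : ℤ) : ℝ)) ∧
    n - t < P.tauSeq (m + 1) ω ∧ P.uSeq (m + 1) (n - t) ω = y}

def rhsCell (m t : ℕ) (y : ℤ) : Set Ω :=
  {ω | TZn P m ω = (t, ((x - y : ℤ) : ℝ)) ∧ P.tauStar ω = n - t ∧ P.zetaStar ω = y}

lemma measure_lhsCell {m : ℕ} (hm : 1 ≤ m) (t : ℕ) (y : ℤ) :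
    ℙ (lhsCell P n x m t y) = ENNReal.ofReal (Q P) * ℙ (rhsCell P n x m t y) :=
  measure_TZn_inter_next_eq_Q_mul P hm (measurableSet_singleton _) (n - t)
    (measurableSet_singleton _)

lemma measurableSet_lhsCell (m t : ℕ) (y : ℤ) : MeasurableSet (lhsCell P n x m t y) :=
  (measurable_TZn P m (measurableSet_singleton _)).inter
    ((P.tau_meas _ measurableSet_Ioi).inter (P.u_meas _ _ (measurableSet_singleton _)))

lemma measurableSet_rhsCell (m t : ℕ) (y : ℤ) : MeasurableSet (rhsCell P n x m t y) :=
  (measurable_TZn P m (measurableSet_singleton _)).inter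
    ((P.tauStar_meas (measurableSet_singleton _)).inter
      (P.zetaStar_meas (measurableSet_singleton _)))

variable {P n x}

lemma nuP_eq_of_mem_lhsCell {m t : ℕ} {y : ℤ} {ω : Ω} (ht : t ≤ n)
    (h : ω ∈ lhsCell P n x m t y) : nuP P n ω = m := by
  obtain ⟨hTZ, hlt, -⟩ := h
  have hT : Tn P m ω = t := congrArg Prod.fst hTZ
  rw [nuP_eq_iff, Tn_succ]
  omega

lemma TnSt_eq_of_mem_rhsCell {m t : ℕ} {y : ℤ} {ω : Ω} (hm : 1 ≤ m) (ht : t ≤ n)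
    (h : ω ∈ rhsCell P n x m t y) : TnSt P m ω = n := by
  obtain ⟨hTZ, hτ, -⟩ := h
  have hT : Tn P m ω = t := congrArg Prod.fst hTZ
  rw [TnSt_eq P ω hm]
  omega

variable (P n x)

lemma pairwise_disjoint_lhsCell :
    Pairwise (Disjoint on fun c : ℕ × Fin (n + 1) × ℤ =>
      lhsCell P n x (c.1 + 1) c.2.1 c.2.2) := by
  rintro ⟨k, t, y⟩ ⟨k', t', y'⟩ hne
  refine Set.disjoint_left.2 fun ω h h' => hne ?_
  have hk : k = k' := by
    have := nuP_eq_of_mem_lhsCell (Nat.le_of_lt_succ t.2) h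
    have := nuP_eq_of_mem_lhsCell (Nat.le_of_lt_succ t'.2) h'
    omega
  subst hk
  have ht : t = t' := Fin.ext (congrArg Prod.fst (h.1.symm.trans h'.1))
  subst ht
  have hy : y = y' := by exact_mod_cast h.2.2.symm.trans h'.2.2
  rw [hy]

lemma pairwise_disjoint_rhsCell :
    Pairwise (Disjoint on fun c : ℕ × Fin (n + 1) × ℤ =>
      rhsCell P n x (c.1 + 1) c.2.1 c.2.2) := by
  rintro ⟨k, t, y⟩ ⟨k', t', y'⟩ hne
  refine Set.disjoint_left.2 fun ω h h' => hne ?_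
  have hk : k = k' := by
    have := nuPSt_eq_of_TnSt_eq P ω (TnSt_eq_of_mem_rhsCell (by omega) (Nat.le_of_lt_succ t.2) h)
    have := nuPSt_eq_of_TnSt_eq P ω (TnSt_eq_of_mem_rhsCell (by omega) (Nat.le_of_lt_succ t'.2) h')
    omega
  subst hk
  have ht : t = t' := Fin.ext (congrArg Prod.fst (h.1.symm.trans h'.1))
  subst ht
  have hy : y = y' := by exact_mod_cast h.2.2.symm.trans h'.2.2
  rw [hy]

end Cells

section Decomposition

variable (P : CRP Ω) (n : ℕ) (x : ℤ)

lemma lhs_event_eq_iUnion (hint : ∀ k i ω, ∃ m : ℤ, P.uSeq k i ω = (m : ℝ)) :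
    {ω | ZP P n ω + P.uSeq (nuP P n ω + 1) (gamP P n ω) ω = (x : ℝ) ∧ P.tauSeq 1 ω ≤ n}
      = ⋃ c : ℕ × Fin (n + 1) × ℤ, lhsCell P n x (c.1 + 1) c.2.1 c.2.2 := by
  ext ω
  simp only [Set.mem_iUnion]
  constructor
  · rintro ⟨hsum, hτ⟩
    obtain ⟨hle, hlt⟩ := (nuP_eq_iff P ω).1 rfl
    obtain ⟨k, hk⟩ : ∃ k, nuP P n ω = k + 1 := Nat.exists_eq_succ_of_ne_zero fun h0 => by
      rw [h0] at hlt
      simp [Tn] at hlt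
      omega
    rw [hk] at hle hlt hsum
    obtain ⟨y, hy⟩ := hint (k + 1 + 1) (n - Tn P (k + 1) ω) ω
    refine ⟨(k, ⟨Tn P (k + 1) ω, by omega⟩, y), Prod.ext rfl ?_, ?_, hy⟩
    · simp only [ZP, gamP, hk, hy] at hsum
      push_cast
      change Zn P (k + 1) ω = _
      linarith
    · show n - Tn P (k + 1) ω < P.tauSeq (k + 1 + 1) ω
      rw [Tn_succ] at hlt
      omega
  · rintro ⟨⟨k, t, y⟩, hcell⟩
    have hν := nuP_eq_of_mem_lhsCell (Nat.le_of_lt_succ t.2) hcell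
    obtain ⟨hTZ, -, hu⟩ := hcell
    have hT : Tn P (k + 1) ω = t := congrArg Prod.fst hTZ
    have hZ : Zn P (k + 1) ω = ((x - y : ℤ) : ℝ) := congrArg Prod.snd hTZ
    refine ⟨?_, ?_⟩
    · simp only [ZP, gamP, hν, hT, hZ, hu]
      push_cast
      ring
    · have hmono := (Tn_strictMono P ω).monotone (Nat.le_add_left 1 k)
      have hT1 : Tn P 1 ω = P.tauSeq 1 ω := by simp [Tn]
      have := t.2
      simp only [hT1, hT] at hmono
      omega

lemma rhs_event_eq_iUnion (hint : ∀ k i ω, ∃ m : ℤ, P.uSeq k i ω = (m : ℝ))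
    (hn : 1 ≤ n) :
    {ω | ZPSt P n ω = (x : ℝ) ∧ gamPSt P n ω = 0}
      = ⋃ c : ℕ × Fin (n + 1) × ℤ, rhsCell P n x (c.1 + 1) c.2.1 c.2.2 := by
  ext ω
  simp only [Set.mem_iUnion]
  constructor
  · rintro ⟨hZ, hγ⟩
    have hle := ((nuPSt_eq_iff P ω (n := n)).1 rfl).1
    have hTn : TnSt P (nuPSt P n ω) ω = n := by
      unfold gamPSt at hγ
      omega
    obtain ⟨k, hk⟩ : ∃ k, nuPSt P n ω = k + 1 := Nat.exists_eq_succ_of_ne_zero fun h0 => by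
      rw [h0] at hTn
      simp [TnSt] at hTn
      omega
    rw [hk, TnSt_eq P ω (by omega)] at hTn
    rw [ZPSt, hk, ZnSt_eq P ω (by omega)] at hZ
    obtain ⟨z, hz⟩ := exists_int_Zn P ω hint (k + 1)
    refine ⟨(k, ⟨Tn P (k + 1) ω, by omega⟩, x - z), Prod.ext rfl ?_, ?_, ?_⟩
    · simp [TZn, hz]
    · show P.tauStar ω = n - Tn P (k + 1) ω
      omega
    · push_cast
      linarith
  · rintro ⟨⟨k, t, y⟩, hcell⟩
    have hTn := TnSt_eq_of_mem_rhsCell (by omega) (Nat.le_of_lt_succ t.2) hcell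
    have hν := nuPSt_eq_of_TnSt_eq P ω hTn
    obtain ⟨hTZ, -, hζ⟩ := hcell
    have hZ : Zn P (k + 1) ω = ((x - y : ℤ) : ℝ) := congrArg Prod.snd hTZ
    refine ⟨?_, ?_⟩
    · rw [ZPSt, hν, ZnSt_eq P ω (by omega), hZ, hζ]
      push_cast
      ring
    · rw [gamPSt, hν, hTn, Nat.sub_self]

end Decomposition

theorem change_of_measure_identity_arith_general {Ω : Type} [MeasureSpace Ω]
    (P : CRP Ω) (hint : ∀ k i ω, ∃ m : ℤ, P.uSeq k i ω = (m : ℝ))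
    (n : ℕ) (hn : 2 ≤ n) (x : ℤ) :
    ℙ {ω | ZP P n ω + P.uSeq (nuP P n ω + 1) (gamP P n ω) ω = (x : ℝ) ∧
        P.tauSeq 1 ω ≤ n}
      = ENNReal.ofReal (Q P) *
        ℙ {ω | ZPSt P n ω = (x : ℝ) ∧ gamPSt P n ω = 0} := by
  rw [lhs_event_eq_iUnion P n x hint, rhs_event_eq_iUnion P n x hint (by omega),
    measure_iUnion (pairwise_disjoint_lhsCell P n x) fun _ => measurableSet_lhsCell P n x _ _ _,
    measure_iUnion (pairwise_disjoint_rhsCell P n x) fun _ => measurableSet_rhsCell P n x _ _ _,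
    ← ENNReal.tsum_mul_left]
  exact tsum_congr fun c => measure_lhsCell P n x (Nat.le_add_left 1 c.1) _ _

/-- **Lemma 8 (the change-of-measure identity, arithmetic form).** Under conditions
`S_I`–`S_IV`, if moreover all the weights `u_{k,i}` are integer-valued, then for every
integer `n ≥ 2` and every integer `x ≥ 1`,
`P(Z₊(n) + u_{ν₊(n)+1, γ₊(n)} = x, τ₁ ≤ n) = Q · P(Z*₊(n) = x, γ*₊(n) = 0)`. -/
theorem change_of_measure_identity_arith {Ω : Type} [MeasureSpace Ω]
    [IsProbabilityMeasure (ℙ : Measure Ω)]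
    (P : CRP Ω) (hint : ∀ k i ω, ∃ m : ℤ, P.uSeq k i ω = (m : ℝ))
    (n : ℕ) (hn : 2 ≤ n) (x : ℤ) (hx : 1 ≤ x) :
    ℙ {ω | ZP P n ω + P.uSeq (nuP P n ω + 1) (gamP P n ω) ω = (x : ℝ) ∧
        P.tauSeq 1 ω ≤ n}
      = ENNReal.ofReal (Q P) *
        ℙ {ω | ZPSt P n ω = (x : ℝ) ∧ gamPSt P n ω = 0} :=
  change_of_measure_identity_arith_general P hint n hn x

end CompoundRenewal
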